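/- In the problem with observable costs, let S̄_t = σ̄_t(M_t) be an information state for observable costs and let Λ̄^∞ be the unique fixed point of 𝒯̄. Then for every initial observation y_0 ∈ 𝒴: Λ̄^∞(σ̄_0(y_0)) = V_0(y_0). -/

import Mathlib

open Set Filter

noncomputable section

/-- Hausdorff distance built from an arbitrary distance function `η`,
`ℋ(A,B) = max{sup_{a∈A} inf_{b∈B} η a b, sup_{b∈B} inf_{a∈A} η a b}`. -/
def hausd {α : Type*} (η : α → α → ℝ) (A B : Set α) : ℝ :=
  max (sSup ((fun a => sInf ((fun b => η a b) '' B)) '' A))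
      (sSup ((fun b => sInf ((fun a => η a b) '' A)) '' B))

/-- The time-invariant DP operator `𝒯` for general information states:
`[𝒯Λ](s,z) = inf_u sup_{c,s'} (c + γ·Λ(s',γz) + ρ(c,s'|s,u)/z)`, the sup being over the
support of the cost distribution `ρ` (off the support `ρ = −∞`). -/
def DPop {Ss Uu : Type*} (γ : ℝ) (ρ : ℝ → Ss → Ss → Uu → EReal)
    (Λ : Ss → ℝ → ℝ) (s : Ss) (z : ℝ) : ℝ :=
  sInf (Set.range fun u : Uu => sSup ((fun p : ℝ × Ss =>
    p.1 + γ * Λ p.2 (γ * z) + (ρ p.1 p.2 s u).toReal / z) '' {p | ρ p.1 p.2 s u ≠ ⊥}))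

/-- Iterates `Λ^n = 𝒯^n Λ^0` starting from `Λ^0 ≡ 0`. -/
def DPopIter {Ss Uu : Type*} (γ : ℝ) (ρ : ℝ → Ss → Ss → Uu → EReal) : ℕ → Ss → ℝ → ℝ
  | 0 => fun _ _ => 0
  | (n+1) => DPop γ ρ (DPopIter γ ρ n)

/-- The law-dependent operator `𝒯(π)`. -/
def DPopLaw {Ss Uu : Type*} (γ : ℝ) (ρ : ℝ → Ss → Ss → Uu → EReal) (π : Ss → ℝ → Uu)
    (Λ : Ss → ℝ → ℝ) (s : Ss) (z : ℝ) : ℝ :=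
  sSup ((fun p : ℝ × Ss =>
    p.1 + γ * Λ p.2 (γ * z) + (ρ p.1 p.2 s (π s z)).toReal / z) '' {p | ρ p.1 p.2 s (π s z) ≠ ⊥})

/-- Iterates `𝒯(π)^n Λ^0` starting from `Λ^0 ≡ 0`. -/
def DPopLawIter {Ss Uu : Type*} (γ : ℝ) (ρ : ℝ → Ss → Ss → Uu → EReal) (π : Ss → ℝ → Uu) :
    ℕ → Ss → ℝ → ℝ
  | 0 => fun _ _ => 0
  | (n+1) => DPopLaw γ ρ π (DPopLawIter γ ρ π n)

/-- The time-invariant DP operator `𝒯̄` for problems with observable costs: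
`[𝒯̄Λ̄](s̄) = inf_u sup_{(c,s̄') ∈ F(s̄,u)} (c + γ·Λ̄(s̄'))` where `F s̄ u = [[C, S̄' | s̄, u]]`. -/
def DPopB {Sb Uu : Type*} (γ : ℝ) (F : Sb → Uu → Set (ℝ × Sb)) (Λ : Sb → ℝ) (s : Sb) : ℝ :=
  sInf (Set.range fun u : Uu => sSup ((fun p : ℝ × Sb => p.1 + γ * Λ p.2) '' F s u))

/-- Iterates `Λ̄^n = 𝒯̄^n Λ̄^0` starting from `Λ̄^0 ≡ 0`. -/
def DPopBIter {Sb Uu : Type*} (γ : ℝ) (F : Sb → Uu → Set (ℝ × Sb)) : ℕ → Sb → ℝ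
  | 0 => fun _ => 0
  | (n+1) => DPopB γ F (DPopBIter γ F n)

/-- The law-dependent observable-cost operator. -/
def DPopBLaw {Sb Uu : Type*} (γ : ℝ) (F : Sb → Uu → Set (ℝ × Sb)) (π : Sb → Uu)
    (Λ : Sb → ℝ) (s : Sb) : ℝ :=
  sSup ((fun p : ℝ × Sb => p.1 + γ * Λ p.2) '' F s (π s))

/-- `β_t(T)` error coefficients, fuel-indexed: `beta γ e k t = β_t(t+k)` with
`β_T(T) = γ^T·e` and `β_t(T) = β_{t+1}(T) + γ^t·e`. -/
def beta (γ e : ℝ) : ℕ → ℕ → ℝ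
  | 0, t => γ ^ t * e
  | (k+1), t => beta γ e k (t+1) + γ ^ t * e

/-- A partially observed non-stochastic input–output system with bounded costs:
disturbances `W_t ∈ 𝒲`, actions `U_t ∈ 𝒰`, observations `Y_0 = h_0(W_0)`,
`Y_{t+1} = h_{t+1}(W_{0:t}, U_{0:t})`, and costs `C_t = d_t(W_{0:t}, U_{0:t}) ∈ 𝒞 ⊆ [cmin, cmax] ⊂ ℝ≥0`,
with a discount factor `γ ∈ (0,1)`. -/
structure Sys where
  W : Type
  U : Type
  Y : Type
  [hW : Nonempty W]
  [hU : Nonempty U]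
  [hY : Nonempty Y]
  γ : ℝ
  cmin : ℝ
  cmax : ℝ
  h0 : W → Y
  h : (t : ℕ) → (Fin (t+1) → W) → (Fin (t+1) → U) → Y
  d : (t : ℕ) → (Fin (t+1) → W) → (Fin (t+1) → U) → ℝ
  hγ0 : 0 < γ
  hγ1 : γ < 1
  hcmin : 0 ≤ cmin
  hcost : ∀ t ω υ, d t ω υ ∈ Set.Icc cmin cmax

attribute [instance] Sys.hW Sys.hU Sys.hY

namespace Sys

variable (S : Sys)

/-- `a^max = c^max/(1-γ)`. -/
def amax : ℝ := S.cmax / (1 - S.γ)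

/-- Memory space at time `t`: `M_t = (Y_{0:t}, U_{0:t-1})`. -/
abbrev Mem (t : ℕ) : Type := (Fin (t+1) → S.Y) × (Fin t → S.U)

/-- Control strategies `g = (g_0, g_1, …)`, `U_t = g_t(M_t)`. -/
abbrev Strat : Type := (t : ℕ) → S.Mem t → S.U

/-- The memory realization at time `0` generated by an initial observation `y_0`. -/
def mem0 (y : S.Y) : S.Mem 0 := (fun _ => y, Fin.elim0)

/-- Open-loop observation `Y_s` generated by disturbances `ω` and actions `u_{0:s-1}`. -/
def oy (ω : ℕ → S.W) : (s : ℕ) → (Fin s → S.U) → S.Y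
  | 0, _ => S.h0 (ω 0)
  | (t+1), υ => S.h t (fun i : Fin (t+1) => ω i) υ

/-- Open-loop cost `C_t` generated by disturbances `ω` and actions `u_{0:t}`. -/
def oc (ω : ℕ → S.W) (t : ℕ) (υ : Fin (t+1) → S.U) : ℝ :=
  S.d t (fun i : Fin (t+1) => ω i) υ

/-- Open-loop accrued cost `A_t = Σ_{ℓ<t} γ^ℓ C_ℓ`. -/
def oA (ω : ℕ → S.W) (t : ℕ) (υ : Fin t → S.U) : ℝ :=
  ∑ ℓ : Fin t, S.γ ^ (ℓ : ℕ) *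
    S.oc ω ℓ (fun j : Fin ((ℓ : ℕ) + 1) => υ ⟨j, by have := j.isLt; have := ℓ.isLt; omega⟩)

/-- Open-loop memory at time `t` generated by disturbances `ω` and actions `u_{0:t-1}`. -/
def omem (ω : ℕ → S.W) (t : ℕ) (υ : Fin t → S.U) : S.Mem t :=
  (fun i : Fin (t+1) =>
    S.oy ω i (fun j : Fin (i : ℕ) => υ ⟨j, by have := j.isLt; have := i.isLt; omega⟩), υ)

/-- Disturbance realizations consistent with the memory realization `m_t`. -/
def consistent (t : ℕ) (m : S.Mem t) : Set (ℕ → S.W) := {ω | S.omem ω t m.2 = m}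

/-- `[[A_t | m_t]]`, the conditional range of the accrued cost. -/
def Arange (t : ℕ) (m : S.Mem t) : Set ℝ :=
  (fun ω => S.oA ω t m.2) '' S.consistent t m

/-- Closed-loop memory `M_t` generated by strategy `g` and disturbances `ω`. -/
def memOf (g : S.Strat) (ω : ℕ → S.W) : (t : ℕ) → S.Mem t
  | 0 => (fun _ => S.h0 (ω 0), Fin.elim0)
  | (t+1) =>
    let m := memOf g ω t
    let us : Fin (t+1) → S.U := Fin.snoc m.2 (g t m)
    (Fin.snoc m.1 (S.h t (fun i : Fin (t+1) => ω i) us), us)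

/-- Closed-loop action `U_t = g_t(M_t)`. -/
def act (g : S.Strat) (ω : ℕ → S.W) (t : ℕ) : S.U := g t (S.memOf g ω t)

/-- Closed-loop cost `C_t`. -/
def ccost (g : S.Strat) (ω : ℕ → S.W) (t : ℕ) : ℝ :=
  S.d t (fun i : Fin (t+1) => ω i) (fun i : Fin (t+1) => S.act g ω i)

/-- Closed-loop accrued cost `A_t = Σ_{ℓ<t} γ^ℓ C_ℓ`. -/
def cA (g : S.Strat) (ω : ℕ → S.W) (t : ℕ) : ℝ :=
  ∑ ℓ ∈ Finset.range t, S.γ ^ ℓ * S.ccost g ω ℓ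

/-- Closed-loop cost-to-go `C_t^∞ = Σ_{ℓ≥t} γ^{ℓ-t} C_ℓ`. -/
def cCinf (g : S.Strat) (ω : ℕ → S.W) (t : ℕ) : ℝ :=
  ∑' k : ℕ, S.γ ^ k * S.ccost g ω (t + k)

/-- Strategy value function
`V_t^g(m_t) = sup_{(a,c^∞) ∈ [[A_t, C_t^∞ | m_t]]^g} (a + γ^t c^∞)`. -/
def V (g : S.Strat) (t : ℕ) (m : S.Mem t) : ℝ :=
  sSup ((fun ω => S.cA g ω t + S.γ ^ t * S.cCinf g ω t) '' {ω | S.memOf g ω t = m})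

/-- Optimal value function `V_t(m_t) = inf_g V_t^g(m_t)`
(the infimum over strategies consistent with the realization `m_t`). -/
def Vopt (t : ℕ) (m : S.Mem t) : ℝ :=
  sInf ((fun g => S.V g t m) '' {g : S.Strat | ∃ ω, S.memOf g ω t = m})

/-- Strategy-dependent finite-horizon function, fuel-indexed:
`Jg g n t m = J_t^g(m_t; t+n)` with `J_T^g(m_T;T) = sup_{[[A_T,C_T|m_T]]^g}(a_T + γ^T c_T)` and
`J_t^g(m_t;T) = sup_{m_{t+1} ∈ [[M_{t+1}|m_t]]^g} J_{t+1}^g(m_{t+1};T)`. -/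
def Jg (g : S.Strat) : ℕ → (t : ℕ) → S.Mem t → ℝ
  | 0, t, m => sSup ((fun ω => S.cA g ω t + S.γ ^ t * S.ccost g ω t) '' {ω | S.memOf g ω t = m})
  | (n+1), t, m =>
    sSup ((fun ω => Jg g n (t+1) (S.memOf g ω (t+1))) '' {ω | S.memOf g ω t = m})

/-- Optimal finite-horizon function, fuel-indexed: `Jopt n t m = J_t(m_t; t+n)` with
`J_T(m_T;T) = inf_{u_T} sup_{[[A_T,C_T|m_T,u_T]]}(a_T + γ^T c_T)` and
`J_t(m_t;T) = inf_{u_t} sup_{m_{t+1} ∈ [[M_{t+1}|m_t,u_t]]} J_{t+1}(m_{t+1};T)`. -/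
def Jopt : ℕ → (t : ℕ) → S.Mem t → ℝ
  | 0, t, m => sInf (Set.range fun u : S.U =>
      sSup ((fun ω => S.oA ω t m.2 + S.γ ^ t * S.oc ω t (Fin.snoc m.2 u)) '' S.consistent t m))
  | (n+1), t, m => sInf (Set.range fun u : S.U =>
      sSup ((fun ω => Jopt n (t+1) (S.omem ω (t+1) (Fin.snoc m.2 u))) '' S.consistent t m))

/-- The conditional accrued distribution `r_t((c,s) | m_t, u_t)` of the pair
`(C_t, S_{t+1})` where `S_{t+1} = σ_{t+1}(M_{t+1})`:
`r_t(x|y) = sup_{a ∈ [0,a^max]}(a + 𝕀(x,a|y)) − sup_{a ∈ [0,a^max]}(a + 𝕀(a|y))` in `ℝ ∪ {−∞}`. -/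
def rcs {Ss : Type*} (σ : (t : ℕ) → S.Mem t → Ss) (t : ℕ) (c : ℝ) (s : Ss)
    (m : S.Mem t) (u : S.U) : EReal :=
  sSup ((fun a : ℝ => (a : EReal)) '' {a | a ∈ Set.Icc 0 S.amax ∧ ∃ ω ∈ S.consistent t m,
      S.oc ω t (Fin.snoc m.2 u) = c ∧ σ (t+1) (S.omem ω (t+1) (Fin.snoc m.2 u)) = s ∧
      S.oA ω t m.2 = a}) -
  sSup ((fun a : ℝ => (a : EReal)) '' {a | a ∈ Set.Icc 0 S.amax ∧ ∃ ω ∈ S.consistent t m,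
      S.oA ω t m.2 = a})

/-! ### Observable costs -/

/-- Memory space with observable costs: `M_t = (Y_{0:t}, C_{0:t-1}, U_{0:t-1})`. -/
abbrev MemO (t : ℕ) : Type := (Fin (t+1) → S.Y) × (Fin t → ℝ) × (Fin t → S.U)

/-- Strategies for the observable-cost problem. -/
abbrev StratO : Type := (t : ℕ) → S.MemO t → S.U

/-- The observable-cost memory realization at time `0` from an initial observation. -/
def memO0 (y : S.Y) : S.MemO 0 := (fun _ => y, Fin.elim0, Fin.elim0)

/-- Open-loop observable-cost memory generated by `ω` and actions `u_{0:t-1}`. -/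
def omemO (ω : ℕ → S.W) (t : ℕ) (υ : Fin t → S.U) : S.MemO t :=
  (fun i : Fin (t+1) =>
      S.oy ω i (fun j : Fin (i : ℕ) => υ ⟨j, by have := j.isLt; have := i.isLt; omega⟩),
   fun ℓ : Fin t =>
      S.oc ω ℓ (fun j : Fin ((ℓ : ℕ) + 1) => υ ⟨j, by have := j.isLt; have := ℓ.isLt; omega⟩),
   υ)

/-- Disturbances consistent with an observable-cost memory realization. -/
def consistentO (t : ℕ) (m : S.MemO t) : Set (ℕ → S.W) := {ω | S.omemO ω t m.2.2 = m}

/-- `[[A_t | m_t]]` for the observable-cost problem. -/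
def ArangeO (t : ℕ) (m : S.MemO t) : Set ℝ :=
  (fun ω => S.oA ω t m.2.2) '' S.consistentO t m

/-- Closed-loop observable-cost memory. -/
def memOfO (g : S.StratO) (ω : ℕ → S.W) : (t : ℕ) → S.MemO t
  | 0 => (fun _ => S.h0 (ω 0), Fin.elim0, Fin.elim0)
  | (t+1) =>
    let m := memOfO g ω t
    let us : Fin (t+1) → S.U := Fin.snoc m.2.2 (g t m)
    (Fin.snoc m.1 (S.h t (fun i : Fin (t+1) => ω i) us),
     Fin.snoc m.2.1 (S.d t (fun i : Fin (t+1) => ω i) us), us)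

/-- Closed-loop action for the observable-cost problem. -/
def actO (g : S.StratO) (ω : ℕ → S.W) (t : ℕ) : S.U := g t (S.memOfO g ω t)

/-- Closed-loop cost for the observable-cost problem. -/
def ccostO (g : S.StratO) (ω : ℕ → S.W) (t : ℕ) : ℝ :=
  S.d t (fun i : Fin (t+1) => ω i) (fun i : Fin (t+1) => S.actO g ω i)

/-- Closed-loop accrued cost for the observable-cost problem. -/
def cAO (g : S.StratO) (ω : ℕ → S.W) (t : ℕ) : ℝ :=
  ∑ ℓ ∈ Finset.range t, S.γ ^ ℓ * S.ccostO g ω ℓ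

/-- Closed-loop cost-to-go for the observable-cost problem. -/
def cCinfO (g : S.StratO) (ω : ℕ → S.W) (t : ℕ) : ℝ :=
  ∑' k : ℕ, S.γ ^ k * S.ccostO g ω (t + k)

/-- Strategy value function for the observable-cost problem. -/
def VO (g : S.StratO) (t : ℕ) (m : S.MemO t) : ℝ :=
  sSup ((fun ω => S.cAO g ω t + S.γ ^ t * S.cCinfO g ω t) '' {ω | S.memOfO g ω t = m})

/-- Optimal value function for the observable-cost problem. -/
def VoptO (t : ℕ) (m : S.MemO t) : ℝ :=
  sInf ((fun g => S.VO g t m) '' {g : S.StratO | ∃ ω, S.memOfO g ω t = m})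

/-- Optimal finite-horizon function for the observable-cost problem, fuel-indexed. -/
def JoptO : ℕ → (t : ℕ) → S.MemO t → ℝ
  | 0, t, m => sInf (Set.range fun u : S.U =>
      sSup ((fun ω => S.oA ω t m.2.2 + S.γ ^ t * S.oc ω t (Fin.snoc m.2.2 u)) ''
        S.consistentO t m))
  | (n+1), t, m => sInf (Set.range fun u : S.U =>
      sSup ((fun ω => JoptO n (t+1) (S.omemO ω (t+1) (Fin.snoc m.2.2 u))) '' S.consistentO t m))

/-- `[[C_t, S̄_{t+1} | m_t, u_t]]`: conditional range of the current cost and next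
(information-) state `S̄_{t+1} = σ̄_{t+1}(M_{t+1})` given the memory `m_t` and action `u_t`. -/
def CSrange {Sb : Type*} (σ : (t : ℕ) → S.MemO t → Sb) (t : ℕ) (m : S.MemO t) (u : S.U) :
    Set (ℝ × Sb) :=
  (fun ω => (S.oc ω t (Fin.snoc m.2.2 u), σ (t+1) (S.omemO ω (t+1) (Fin.snoc m.2.2 u)))) ''
    S.consistentO t m

/-- `[[C_t, Y_{t+1} | m_t, u_t]]`. -/
def CYrange (t : ℕ) (m : S.MemO t) (u : S.U) : Set (ℝ × S.Y) :=
  (fun ω => (S.oc ω t (Fin.snoc m.2.2 u), S.oy ω (t+1) (Fin.snoc m.2.2 u))) '' S.consistentO t m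

open Classical in
/-- Conditional indicator `𝕀((c_t, m_{t+1}) | m_t, u_t)` for the observable-cost problem. -/
def indObs (t : ℕ) (c : ℝ) (m' : S.MemO (t+1)) (m : S.MemO t) (u : S.U) : EReal :=
  if ∃ ω ∈ S.consistentO t m,
      S.oc ω t (Fin.snoc m.2.2 u) = c ∧ S.omemO ω (t+1) (Fin.snoc m.2.2 u) = m' then 0 else ⊥

/-- Conditional accrued distribution `r_t((c_t, m_{t+1}) | m_t, u_t)` for the
observable-cost problem. -/
def rObs (t : ℕ) (c : ℝ) (m' : S.MemO (t+1)) (m : S.MemO t) (u : S.U) : EReal :=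
  sSup ((fun a : ℝ => (a : EReal)) '' {a | a ∈ Set.Icc 0 S.amax ∧ ∃ ω ∈ S.consistentO t m,
      S.oc ω t (Fin.snoc m.2.2 u) = c ∧ S.omemO ω (t+1) (Fin.snoc m.2.2 u) = m' ∧
      S.oA ω t m.2.2 = a}) -
  sSup ((fun a : ℝ => (a : EReal)) '' {a | a ∈ Set.Icc 0 S.amax ∧ ∃ ω ∈ S.consistentO t m,
      S.oA ω t m.2.2 = a})

end Sys

namespace NSCAux

/-- sSup of an affine image. -/
lemma csSup_affine (a c : ℝ) (hc : 0 < c) (E : Set ℝ) (hne : E.Nonempty) (hbd : BddAbove E) :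
    sSup ((fun x => a + c * x) '' E) = a + c * sSup E := by
  apply IsLUB.csSup_eq _ (hne.image _)
  constructor
  · rintro y ⟨x, hx, rfl⟩
    have := le_csSup hbd hx
    dsimp only
    nlinarith
  · intro b hb
    have h1 : ∀ x ∈ E, x ≤ (b - a) / c := by
      intro x hx
      have := hb ⟨x, hx, rfl⟩
      dsimp only at this
      rw [le_div_iff₀ hc]; linarith
    have := csSup_le hne h1
    rw [le_div_iff₀ hc] at this; linarith

lemma csInf_affine (a c : ℝ) (hc : 0 < c) (E : Set ℝ) (hne : E.Nonempty) (hbd : BddBelow E) :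
    sInf ((fun x => a + c * x) '' E) = a + c * sInf E := by
  apply IsGLB.csInf_eq _ (hne.image _)
  constructor
  · rintro y ⟨x, hx, rfl⟩
    have := csInf_le hbd hx
    dsimp only
    nlinarith
  · intro b hb
    have h1 : ∀ x ∈ E, (b - a) / c ≤ x := by
      intro x hx
      have := hb ⟨x, hx, rfl⟩
      dsimp only at this
      rw [div_le_iff₀ hc]; linarith
    have := le_csInf hne h1
    rw [div_le_iff₀ hc] at this; linarith

/-- Lipschitz property of sSup over images, valid with Lean's junk conventions. -/
lemma abs_sSup_image_sub_le {α : Type*} (f g : α → ℝ) (A : Set α) (δ : ℝ) (hδ : 0 ≤ δ)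
    (h : ∀ x ∈ A, |f x - g x| ≤ δ) :
    |sSup (f '' A) - sSup (g '' A)| ≤ δ := by
  rcases A.eq_empty_or_nonempty with rfl | hne
  · simp [hδ]
  by_cases hbf : BddAbove (f '' A)
  · have hbg : BddAbove (g '' A) := by
      obtain ⟨M, hM⟩ := hbf
      exact ⟨M + δ, by rintro y ⟨x, hx, rfl⟩
                       have h1 := hM ⟨x, hx, rfl⟩
                       have := abs_le.1 (h x hx); linarith⟩
    rw [abs_le]
    constructor
    · have : sSup (g '' A) ≤ sSup (f '' A) + δ := by
        apply csSup_le (hne.image _)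
        rintro y ⟨x, hx, rfl⟩
        have h1 := le_csSup hbf (mem_image_of_mem f hx)
        have := abs_le.1 (h x hx); linarith
      linarith
    · have : sSup (f '' A) ≤ sSup (g '' A) + δ := by
        apply csSup_le (hne.image _)
        rintro y ⟨x, hx, rfl⟩
        have h1 := le_csSup hbg (mem_image_of_mem g hx)
        have := abs_le.1 (h x hx); linarith
      linarith
  · have hbg : ¬ BddAbove (g '' A) := by
      intro ⟨M, hM⟩
      apply hbf
      exact ⟨M + δ, by rintro y ⟨x, hx, rfl⟩
                       have h1 := hM ⟨x, hx, rfl⟩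
                       have := abs_le.1 (h x hx); linarith⟩
    rw [Real.sSup_of_not_bddAbove hbf, Real.sSup_of_not_bddAbove hbg]
    simpa using hδ

lemma abs_sInf_image_sub_le {α : Type*} (f g : α → ℝ) (A : Set α) (δ : ℝ) (hδ : 0 ≤ δ)
    (h : ∀ x ∈ A, |f x - g x| ≤ δ) :
    |sInf (f '' A) - sInf (g '' A)| ≤ δ := by
  have h1 : sInf (f '' A) = -sSup ((fun x => -f x) '' A) := by
    rw [Real.sInf_def]
    congr 2
    ext y
    simp only [Set.mem_neg, Set.mem_image]
    constructor
    · rintro ⟨x, hx, hfx⟩; exact ⟨x, hx, by linarith⟩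
    · rintro ⟨x, hx, rfl⟩; exact ⟨x, hx, by ring⟩
  have h2 : sInf (g '' A) = -sSup ((fun x => -g x) '' A) := by
    rw [Real.sInf_def]
    congr 2
    ext y
    simp only [Set.mem_neg, Set.mem_image]
    constructor
    · rintro ⟨x, hx, hfx⟩; exact ⟨x, hx, by linarith⟩
    · rintro ⟨x, hx, rfl⟩; exact ⟨x, hx, by ring⟩
  rw [h1, h2]
  have := abs_sSup_image_sub_le (fun x => -f x) (fun x => -g x) A δ hδ
    (by intro x hx; simpa [abs_sub_comm, neg_add_eq_sub] using h x hx)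
  calc |-sSup ((fun x => -f x) '' A) - -sSup ((fun x => -g x) '' A)|
      = |sSup ((fun x => -g x) '' A) - sSup ((fun x => -f x) '' A)| := by ring_nf
    _ ≤ δ := by rw [abs_sub_comm]; exact this

end NSCAux

namespace NSCAux

lemma snoc_lt {α : Sort*} {n : ℕ} (f : Fin n → α) (x : α) (i : Fin (n+1)) (h : (i:ℕ) < n) :
    (Fin.snoc f x : Fin (n+1) → α) i = f ⟨i, h⟩ :=
  Fin.snoc_castSucc (α := fun _ => α) x f ⟨i, h⟩

lemma snoc_last' {α : Sort*} {n : ℕ} (f : Fin n → α) (x : α) (i : Fin (n+1)) (h : (i:ℕ) = n) :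
    (Fin.snoc f x : Fin (n+1) → α) i = x := by
  rcases i with ⟨iv, hlt⟩
  have h' : iv = n := h
  subst h'
  exact Fin.snoc_last (α := fun _ => α) x f

lemma oy_congr (S : Sys) (ω : ℕ → S.W) {s s' : ℕ} (h : s' = s) (υ : Fin s → S.U)
    (υ' : Fin s' → S.U) (hυ : ∀ j : Fin s', υ' j = υ ⟨j, by omega⟩) :
    S.oy ω s' υ' = S.oy ω s υ := by
  subst h
  congr 1
  funext j
  rw [hυ]

lemma oc_congr (S : Sys) (ω : ℕ → S.W) {s s' : ℕ} (h : s' = s) (υ : Fin (s+1) → S.U)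
    (υ' : Fin (s'+1) → S.U) (hυ : ∀ j : Fin (s'+1), υ' j = υ ⟨j, by omega⟩) :
    S.oc ω s' υ' = S.oc ω s υ := by
  subst h
  have : υ' = υ := by funext j; rw [hυ]
  rw [this]

lemma memOfO_succ (S : Sys) (g : S.StratO) (ω : ℕ → S.W) (t : ℕ) :
    S.memOfO g ω (t+1) =
      ((Fin.snoc (S.memOfO g ω t).1 (S.h t (fun i : Fin (t+1) => ω i)
          (Fin.snoc (S.memOfO g ω t).2.2 (g t (S.memOfO g ω t)))) : Fin (t+2) → S.Y),
       (Fin.snoc (S.memOfO g ω t).2.1 (S.d t (fun i : Fin (t+1) => ω i)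
          (Fin.snoc (S.memOfO g ω t).2.2 (g t (S.memOfO g ω t)))) : Fin (t+1) → ℝ),
       (Fin.snoc (S.memOfO g ω t).2.2 (g t (S.memOfO g ω t)) : Fin (t+1) → S.U)) := rfl

/-- L1: closed-loop memory equals open-loop memory along closed-loop actions. -/
lemma memOfO_eq (S : Sys) (g : S.StratO) (ω : ℕ → S.W) :
    ∀ t, S.memOfO g ω t = S.omemO ω t (fun i : Fin t => S.actO g ω i) := by
  intro t
  induction t with
  | zero =>
    refine Prod.ext ?_ (Prod.ext ?_ ?_)
    · funext i
      have hi : (i : ℕ) = 0 := by omega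
      exact (oy_congr S ω hi (fun j : Fin 0 => j.elim0) _
        (fun j => absurd j.isLt (by omega))).symm
    · funext ℓ; exact absurd ℓ.isLt (by omega)
    · funext i; exact absurd i.isLt (by omega)
  | succ t IH =>
    have hus : (Fin.snoc (S.memOfO g ω t).2.2 (g t (S.memOfO g ω t)) : Fin (t+1) → S.U)
        = fun i : Fin (t+1) => S.actO g ω i := by
      funext i
      by_cases hi : (i : ℕ) < t
      · rw [snoc_lt _ _ _ hi, IH]
        rfl
      · have hit : (i : ℕ) = t := by omega
        rw [snoc_last' _ _ _ hit]
        simp only [hit]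
        rfl
    rw [memOfO_succ]
    refine Prod.ext ?_ (Prod.ext ?_ ?_)
    · funext i
      show (Fin.snoc _ _ : Fin (t+2) → S.Y) i = _
      by_cases hi : (i : ℕ) < t + 1
      · rw [snoc_lt _ _ _ hi, IH]
        rfl
      · have hit : (i : ℕ) = t + 1 := by omega
        rw [snoc_last' _ _ _ hit]
        refine Eq.trans ?_ (oy_congr S ω hit (fun i : Fin (t+1) => S.actO g ω i)
          (fun j : Fin ((i:ℕ)) => S.actO g ω j) (fun j => rfl)).symm
        rw [hus]
        rfl
    · funext ℓ
      show (Fin.snoc _ _ : Fin (t+1) → ℝ) ℓ = _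
      by_cases hl : (ℓ : ℕ) < t
      · rw [snoc_lt _ _ _ hl, IH]
        rfl
      · have hlt : (ℓ : ℕ) = t := by omega
        rw [snoc_last' _ _ _ hlt]
        refine Eq.trans ?_ (oc_congr S ω hlt (fun i : Fin (t+1) => S.actO g ω i)
          (fun j : Fin ((ℓ:ℕ)+1) => S.actO g ω j) (fun j => rfl)).symm
        rw [hus]
        rfl
    · exact hus

/-- Truncation of an observable-cost memory. -/
def truncO (S : Sys) {t : ℕ} (m : S.MemO t) (s : ℕ) (h : s ≤ t) : S.MemO s :=
  (fun i : Fin (s+1) => m.1 ⟨i, by omega⟩, fun i : Fin s => m.2.1 ⟨i, by omega⟩,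
   fun i : Fin s => m.2.2 ⟨i, by omega⟩)

lemma truncO_self (S : Sys) {t : ℕ} (m : S.MemO t) (h : t ≤ t) : truncO S m t h = m := by
  refine Prod.ext ?_ (Prod.ext ?_ ?_) <;> · funext i; rfl

lemma omemO_mem_consistentO (S : Sys) (ω : ℕ → S.W) (t : ℕ) (υ : Fin t → S.U) :
    ω ∈ S.consistentO t (S.omemO ω t υ) := rfl

lemma closed_mem_consistentO (S : Sys) (g : S.StratO) (ω : ℕ → S.W) {t : ℕ} {m : S.MemO t}
    (h : S.memOfO g ω t = m) : ω ∈ S.consistentO t m := by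
  subst h
  show S.omemO ω t _ = _
  rw [memOfO_eq S g ω t]
  rfl

lemma truncO_memOfO (S : Sys) (g : S.StratO) (ω : ℕ → S.W) :
    ∀ t s (h : s ≤ t), truncO S (S.memOfO g ω t) s h = S.memOfO g ω s := by
  intro t
  induction t with
  | zero =>
    intro s h
    have hs : s = 0 := by omega
    subst hs
    exact truncO_self S _ h
  | succ t IH =>
    intro s h
    by_cases hs : s = t + 1
    · subst hs; exact truncO_self S _ h
    · have h' : s ≤ t := by omega
      have key : truncO S (S.memOfO g ω (t+1)) s h = truncO S (S.memOfO g ω t) s h' := by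
        rw [memOfO_succ]
        refine Prod.ext ?_ (Prod.ext ?_ ?_)
        · funext i
          exact snoc_lt _ _ (⟨(i:ℕ), by have := i.isLt; omega⟩ : Fin (t+2))
            (show ((i:ℕ)) < t+1 by have := i.isLt; omega)
        · funext i
          exact snoc_lt _ _ (⟨(i:ℕ), by have := i.isLt; omega⟩ : Fin (t+1))
            (show ((i:ℕ)) < t by have := i.isLt; omega)
        · funext i
          exact snoc_lt _ _ (⟨(i:ℕ), by have := i.isLt; omega⟩ : Fin (t+1))
            (show ((i:ℕ)) < t by have := i.isLt; omega)
      rw [key, IH s h']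

lemma consistent_y (S : Sys) {ω : ℕ → S.W} {t : ℕ} {m : S.MemO t}
    (hω : ω ∈ S.consistentO t m) (i : Fin (t+1)) :
    S.oy ω i (fun j : Fin (i:ℕ) => m.2.2 ⟨j, by omega⟩) = m.1 i :=
  congrFun (congrArg Prod.fst hω) i

lemma consistent_c (S : Sys) {ω : ℕ → S.W} {t : ℕ} {m : S.MemO t}
    (hω : ω ∈ S.consistentO t m) (ℓ : Fin t) :
    S.oc ω ℓ (fun j : Fin ((ℓ:ℕ)+1) => m.2.2 ⟨j, by omega⟩) = m.2.1 ℓ :=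
  congrFun (congrArg (fun x => x.2.1) hω) ℓ

/-- L2: if `m` is reachable under `g`, the consistent set equals the closed-loop set. -/
lemma consistentO_eq (S : Sys) (g : S.StratO) (t : ℕ) (m : S.MemO t)
    (h : ∃ ω₀, S.memOfO g ω₀ t = m) :
    S.consistentO t m = {ω | S.memOfO g ω t = m} := by
  obtain ⟨ω₀, hω₀⟩ := h
  have hQ : ∀ s (hs : s < t), g s (truncO S m s (le_of_lt hs)) = m.2.2 ⟨s, hs⟩ := by
    intro s hs
    have h1 := truncO_memOfO S g ω₀ t (s+1) (by omega)
    rw [hω₀] at h1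
    have h0 := truncO_memOfO S g ω₀ t s (by omega)
    rw [hω₀] at h0
    calc g s (truncO S m s (le_of_lt hs)) = g s (S.memOfO g ω₀ s) := by rw [h0]
      _ = (S.memOfO g ω₀ (s+1)).2.2 ⟨s, by omega⟩ := by
            rw [memOfO_succ]
            exact (snoc_last' _ _ _ rfl).symm
      _ = (truncO S m (s+1) hs).2.2 ⟨s, by omega⟩ := by rw [h1]
      _ = m.2.2 ⟨s, hs⟩ := rfl
  ext ω
  constructor
  · intro hω
    show S.memOfO g ω t = m
    have P : ∀ s (hs : s ≤ t), S.memOfO g ω s = truncO S m s hs := by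
      intro s
      induction s with
      | zero =>
        intro hs
        refine Prod.ext ?_ (Prod.ext ?_ ?_)
        · funext i
          show S.h0 (ω 0) = m.1 ⟨(i:ℕ), by omega⟩
          have hy := consistent_y S hω ⟨0, by omega⟩
          refine Eq.trans ?_ (hy.trans ?_)
          · rfl
          · exact congrArg m.1 (by ext; simp; try omega)
        · funext i; exact absurd i.isLt (by omega)
        · funext i; exact absurd i.isLt (by omega)
      | succ s IHs =>
        intro hs
        have hss : s ≤ t := by omega
        have hst : s < t := by omega
        have hms : S.memOfO g ω s = truncO S m s hss := IHs hss
        have hus : (Fin.snoc (S.memOfO g ω s).2.2 (g s (S.memOfO g ω s)) : Fin (s+1) → S.U)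
            = fun j : Fin (s+1) => m.2.2 ⟨j, by omega⟩ := by
          funext j
          by_cases hj : (j:ℕ) < s
          · rw [snoc_lt _ _ _ hj, hms]; rfl
          · have hjs : (j:ℕ) = s := by omega
            rw [snoc_last' _ _ _ hjs, hms, hQ s hst]
            exact congrArg m.2.2 (by ext; simp; try omega)
        rw [memOfO_succ]
        refine Prod.ext ?_ (Prod.ext ?_ ?_)
        · funext i
          show (Fin.snoc _ _ : Fin (s+2) → S.Y) i = m.1 ⟨(i:ℕ), by omega⟩
          by_cases hi : (i:ℕ) < s+1
          · rw [snoc_lt _ _ _ hi, hms]; rfl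
          · have hi2 : (i:ℕ) = s+1 := by omega
            rw [snoc_last' _ _ _ hi2, hus]
            have hy := consistent_y S hω ⟨s+1, by omega⟩
            refine Eq.trans ?_ (hy.trans ?_)
            · rfl
            · exact congrArg m.1 (by ext; simp; try omega)
        · funext i
          show (Fin.snoc _ _ : Fin (s+1) → ℝ) i = m.2.1 ⟨(i:ℕ), by omega⟩
          by_cases hi : (i:ℕ) < s
          · rw [snoc_lt _ _ _ hi, hms]; rfl
          · have hi2 : (i:ℕ) = s := by omega
            rw [snoc_last' _ _ _ hi2, hus]
            have hc := consistent_c S hω ⟨s, by omega⟩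
            refine Eq.trans ?_ (hc.trans ?_)
            · rfl
            · exact congrArg m.2.1 (by ext; simp; try omega)
        · exact hus
    rw [P t le_rfl]
    exact truncO_self S m le_rfl
  · intro hω
    exact closed_mem_consistentO S g ω hω

/-! ### Accrued costs and bounds -/

/-- The accrued cost as read off from the (observable-cost) memory. -/
def AofM (S : Sys) {t : ℕ} (m : S.MemO t) : ℝ := ∑ ℓ : Fin t, S.γ ^ (ℓ:ℕ) * m.2.1 ℓ

lemma oA_eq_AofM (S : Sys) {ω : ℕ → S.W} {t : ℕ} {m : S.MemO t}
    (hω : ω ∈ S.consistentO t m) : S.oA ω t m.2.2 = AofM S m := by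
  unfold Sys.oA AofM
  refine Finset.sum_congr rfl fun ℓ _ => ?_
  congr 1
  exact consistent_c S hω ℓ

lemma cmax_nonneg (S : Sys) : 0 ≤ S.cmax := by
  have := S.hcost 0 (fun _ => Classical.arbitrary S.W) (fun _ => Classical.arbitrary S.U)
  have h2 := S.hcmin
  exact le_trans (le_trans h2 this.1) this.2

lemma one_sub_γ_pos (S : Sys) : 0 < 1 - S.γ := by have := S.hγ1; linarith

lemma amax_nonneg (S : Sys) : 0 ≤ S.amax :=
  div_nonneg (cmax_nonneg S) (one_sub_γ_pos S).le

lemma cmax_le_amax (S : Sys) : S.cmax ≤ S.amax := by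
  rw [Sys.amax, le_div_iff₀ (one_sub_γ_pos S)]
  nlinarith [cmax_nonneg S, S.hγ0]

lemma geom_sum_le_inv (S : Sys) (t : ℕ) :
    ∑ ℓ ∈ Finset.range t, S.γ ^ ℓ ≤ (1 - S.γ)⁻¹ := by
  have h0 := S.hγ0
  have h1 := S.hγ1
  rw [geom_sum_eq (by linarith : S.γ ≠ 1)]
  rw [div_le_iff_of_neg (by linarith : S.γ - 1 < 0)]
  have : 0 ≤ S.γ ^ t := pow_nonneg h0.le t
  have h2 : (1 - S.γ)⁻¹ * (S.γ - 1) = -1 := by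
    rw [inv_mul_eq_div, div_eq_iff (by linarith : (1:ℝ) - S.γ ≠ 0)]; ring
  rw [h2]; linarith

lemma sum_geom_cmax_le (S : Sys) (t : ℕ) :
    ∑ ℓ ∈ Finset.range t, S.γ ^ ℓ * S.cmax ≤ S.amax := by
  rw [← Finset.sum_mul, Sys.amax, div_eq_mul_inv, mul_comm S.cmax]
  exact mul_le_mul_of_nonneg_right (geom_sum_le_inv S t) (cmax_nonneg S)

lemma AofM_nonneg (S : Sys) {t : ℕ} {m : S.MemO t} (hne : (S.consistentO t m).Nonempty) :
    0 ≤ AofM S m := by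
  obtain ⟨ω, hω⟩ := hne
  refine Finset.sum_nonneg fun ℓ _ => mul_nonneg (pow_nonneg S.hγ0.le _) ?_
  rw [← consistent_c S hω ℓ]
  exact le_trans S.hcmin (S.hcost _ _ _).1

lemma AofM_le_amax (S : Sys) {t : ℕ} {m : S.MemO t} (hne : (S.consistentO t m).Nonempty) :
    AofM S m ≤ S.amax := by
  obtain ⟨ω, hω⟩ := hne
  calc AofM S m ≤ ∑ ℓ : Fin t, S.γ ^ (ℓ:ℕ) * S.cmax := by
        refine Finset.sum_le_sum fun ℓ _ => mul_le_mul_of_nonneg_left ?_ (pow_nonneg S.hγ0.le _)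
        rw [← consistent_c S hω ℓ]
        exact (S.hcost _ _ _).2
    _ = ∑ ℓ ∈ Finset.range t, S.γ ^ ℓ * S.cmax := Fin.sum_univ_eq_sum_range (fun ℓ => S.γ ^ ℓ * S.cmax) t
    _ ≤ S.amax := sum_geom_cmax_le S t

lemma AofM_omemO (S : Sys) {ω : ℕ → S.W} {t : ℕ} {m : S.MemO t} (u : S.U)
    (hω : ω ∈ S.consistentO t m) :
    AofM S (S.omemO ω (t+1) (Fin.snoc m.2.2 u))
      = AofM S m + S.γ ^ t * S.oc ω t (Fin.snoc m.2.2 u) := by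
  unfold AofM
  rw [Fin.sum_univ_castSucc]
  congr 1
  · refine Finset.sum_congr rfl fun ℓ _ => ?_
    have hc : (S.omemO ω (t+1) (Fin.snoc m.2.2 u)).2.1 ℓ.castSucc = m.2.1 ℓ := by
      show S.oc ω ℓ _ = m.2.1 ℓ
      refine Eq.trans (congrArg (S.oc ω (ℓ:ℕ)) ?_) (consistent_c S hω ℓ)
      funext j
      have hcs : ((ℓ.castSucc : Fin (t+1)):ℕ) = (ℓ:ℕ) := rfl
      exact snoc_lt _ _ (⟨(j:ℕ), by have := j.isLt; have := ℓ.isLt; omega⟩ : Fin (t+1))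
        (show ((j:ℕ)) < t by have := j.isLt; have := ℓ.isLt; omega)
    rw [hc, Fin.coe_castSucc]

/-! ### Closed-loop lemmas -/

lemma memOfO_acts (S : Sys) (g : S.StratO) (ω : ℕ → S.W) (t : ℕ) :
    (S.memOfO g ω t).2.2 = fun i : Fin t => S.actO g ω i := by
  rw [memOfO_eq]; rfl

lemma memOfO_cost (S : Sys) (g : S.StratO) (ω : ℕ → S.W) {t : ℕ} (ℓ : Fin t) :
    (S.memOfO g ω t).2.1 ℓ = S.ccostO g ω ℓ := by
  rw [memOfO_eq]; rfl

lemma snoc_acts (S : Sys) (g : S.StratO) (ω : ℕ → S.W) {t : ℕ} {m : S.MemO t}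
    (hω : S.memOfO g ω t = m) :
    (Fin.snoc m.2.2 (g t m) : Fin (t+1) → S.U) = fun i : Fin (t+1) => S.actO g ω i := by
  subst hω
  funext i
  by_cases hi : (i : ℕ) < t
  · rw [snoc_lt _ _ _ hi, memOfO_eq]
    rfl
  · have hit : (i : ℕ) = t := by omega
    rw [snoc_last' _ _ _ hit]
    simp only [hit]
    rfl

lemma omemO_snoc (S : Sys) (g : S.StratO) (ω : ℕ → S.W) {t : ℕ} {m : S.MemO t}
    (hω : S.memOfO g ω t = m) :
    S.omemO ω (t+1) (Fin.snoc m.2.2 (g t m)) = S.memOfO g ω (t+1) := by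
  rw [snoc_acts S g ω hω, ← memOfO_eq]

lemma oc_snoc (S : Sys) (g : S.StratO) (ω : ℕ → S.W) {t : ℕ} {m : S.MemO t}
    (hω : S.memOfO g ω t = m) :
    S.oc ω t (Fin.snoc m.2.2 (g t m)) = S.ccostO g ω t := by
  rw [snoc_acts S g ω hω]
  rfl

lemma cAO_eq_AofM (S : Sys) (g : S.StratO) (ω : ℕ → S.W) {t : ℕ} {m : S.MemO t}
    (hω : S.memOfO g ω t = m) : S.cAO g ω t = AofM S m := by
  subst hω
  unfold Sys.cAO AofM
  rw [← Fin.sum_univ_eq_sum_range (fun ℓ => S.γ ^ ℓ * S.ccostO g ω ℓ) t]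
  refine Finset.sum_congr rfl fun ℓ _ => ?_
  rw [memOfO_cost]

lemma memOfO_prefix (S : Sys) (g : S.StratO) {ω ω' : ℕ → S.W} {t : ℕ}
    (h : S.memOfO g ω' (t+1) = S.memOfO g ω (t+1)) :
    S.memOfO g ω' t = S.memOfO g ω t := by
  have h1 := truncO_memOfO S g ω' (t+1) t (by omega)
  have h2 := truncO_memOfO S g ω (t+1) t (by omega)
  rw [← h1, ← h2, h]

/-! ### Cost-to-go facts -/

lemma ccostO_mem (S : Sys) (g : S.StratO) (ω : ℕ → S.W) (t : ℕ) :
    S.ccostO g ω t ∈ Set.Icc S.cmin S.cmax := S.hcost t _ _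

lemma ccostO_nonneg (S : Sys) (g : S.StratO) (ω : ℕ → S.W) (t : ℕ) :
    0 ≤ S.ccostO g ω t := le_trans S.hcmin (ccostO_mem S g ω t).1

lemma summable_cc (S : Sys) (g : S.StratO) (ω : ℕ → S.W) (t : ℕ) :
    Summable (fun k => S.γ ^ k * S.ccostO g ω (t + k)) := by
  refine Summable.of_nonneg_of_le
    (fun k => mul_nonneg (pow_nonneg S.hγ0.le k) (ccostO_nonneg S g ω _))
    (fun k => mul_le_mul_of_nonneg_left (ccostO_mem S g ω _).2 (pow_nonneg S.hγ0.le k)) ?_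
  exact (summable_geometric_of_lt_one S.hγ0.le S.hγ1).mul_right S.cmax

lemma cCinfO_nonneg (S : Sys) (g : S.StratO) (ω : ℕ → S.W) (t : ℕ) :
    0 ≤ S.cCinfO g ω t :=
  tsum_nonneg fun k => mul_nonneg (pow_nonneg S.hγ0.le k) (ccostO_nonneg S g ω _)

lemma cCinfO_le_amax (S : Sys) (g : S.StratO) (ω : ℕ → S.W) (t : ℕ) :
    S.cCinfO g ω t ≤ S.amax := by
  have h1 : S.cCinfO g ω t ≤ ∑' k : ℕ, S.γ ^ k * S.cmax := by
    refine Summable.tsum_le_tsum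
      (fun k => mul_le_mul_of_nonneg_left (ccostO_mem S g ω _).2 (pow_nonneg S.hγ0.le k))
      (summable_cc S g ω t) ?_
    exact (summable_geometric_of_lt_one S.hγ0.le S.hγ1).mul_right S.cmax
  calc S.cCinfO g ω t ≤ ∑' k : ℕ, S.γ ^ k * S.cmax := h1
    _ = (1 - S.γ)⁻¹ * S.cmax := by
        rw [tsum_mul_right, tsum_geometric_of_lt_one S.hγ0.le S.hγ1]
    _ = S.amax := by rw [Sys.amax, div_eq_mul_inv]; ring

/-- Partial (finite-horizon) discounted cost, over times `t, …, t+n`. -/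
def Ppart (S : Sys) (g : S.StratO) (n t : ℕ) (ω : ℕ → S.W) : ℝ :=
  ∑ k ∈ Finset.range (n+1), S.γ ^ k * S.ccostO g ω (t + k)

lemma Ppart_nonneg (S : Sys) (g : S.StratO) (n t : ℕ) (ω : ℕ → S.W) :
    0 ≤ Ppart S g n t ω :=
  Finset.sum_nonneg fun k _ => mul_nonneg (pow_nonneg S.hγ0.le k) (ccostO_nonneg S g ω _)

lemma Ppart_le_amax (S : Sys) (g : S.StratO) (n t : ℕ) (ω : ℕ → S.W) :
    Ppart S g n t ω ≤ S.amax := by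
  calc Ppart S g n t ω ≤ ∑ k ∈ Finset.range (n+1), S.γ ^ k * S.cmax :=
        Finset.sum_le_sum fun k _ =>
          mul_le_mul_of_nonneg_left (ccostO_mem S g ω _).2 (pow_nonneg S.hγ0.le k)
    _ ≤ S.amax := sum_geom_cmax_le S (n+1)

lemma cCinfO_split (S : Sys) (g : S.StratO) (ω : ℕ → S.W) (t n : ℕ) :
    S.cCinfO g ω t = Ppart S g n t ω + S.γ ^ (n+1) * S.cCinfO g ω (t + (n+1)) := by
  unfold Sys.cCinfO Ppart
  rw [← Summable.sum_add_tsum_nat_add (n+1) (summable_cc S g ω t)]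
  congr 1
  have : ∀ k : ℕ, S.γ ^ (k + (n+1)) * S.ccostO g ω (t + (k + (n+1)))
      = S.γ ^ (n+1) * (S.γ ^ k * S.ccostO g ω (t + (n+1) + k)) := by
    intro k
    rw [pow_add, show t + (k + (n+1)) = t + (n+1) + k by omega]
    ring
  rw [tsum_congr this, tsum_mul_left]

lemma Ppart_le_cCinfO (S : Sys) (g : S.StratO) (ω : ℕ → S.W) (t n : ℕ) :
    Ppart S g n t ω ≤ S.cCinfO g ω t := by
  rw [cCinfO_split S g ω t n]
  have := mul_nonneg (pow_nonneg S.hγ0.le (n+1)) (cCinfO_nonneg S g ω (t + (n+1)))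
  linarith

lemma cCinfO_le_Ppart (S : Sys) (g : S.StratO) (ω : ℕ → S.W) (t n : ℕ) :
    S.cCinfO g ω t ≤ Ppart S g n t ω + S.γ ^ (n+1) * S.amax := by
  rw [cCinfO_split S g ω t n]
  have := mul_le_mul_of_nonneg_left (cCinfO_le_amax S g ω (t + (n+1)))
    (pow_nonneg S.hγ0.le (n+1))
  linarith

lemma Ppart_shift (S : Sys) (g : S.StratO) (ω : ℕ → S.W) (t n : ℕ) :
    S.cAO g ω (t+1) + S.γ ^ (t+1) * Ppart S g n (t+1) ω
      = S.cAO g ω t + S.γ ^ t * Ppart S g (n+1) t ω := by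
  unfold Sys.cAO Ppart
  rw [Finset.sum_range_succ]
  rw [Finset.sum_range_succ' (fun k => S.γ ^ k * S.ccostO g ω (t + k)) (n+1)]
  rw [Finset.mul_sum, mul_add, Finset.mul_sum]
  have h2 : ∀ k ∈ Finset.range (n+1), S.γ ^ (t+1) * (S.γ ^ k * S.ccostO g ω ((t+1) + k))
      = S.γ ^ t * (S.γ ^ (k+1) * S.ccostO g ω (t + (k+1))) := by
    intro k _
    rw [pow_succ, pow_succ, show (t+1) + k = t + (k+1) by omega]
    ring
  rw [Finset.sum_congr rfl h2]
  simp only [pow_zero, one_mul, Nat.add_zero]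
  ring

/-! ### Suprema/infima plumbing -/

lemma sSup_bound {α : Type*} {A : Set α} (hne : A.Nonempty) (f : α → ℝ) (lo hi : ℝ)
    (h : ∀ x ∈ A, lo ≤ f x ∧ f x ≤ hi) :
    lo ≤ sSup (f '' A) ∧ sSup (f '' A) ≤ hi := by
  obtain ⟨x0, hx0⟩ := hne
  have hb : BddAbove (f '' A) := ⟨hi, by rintro y ⟨x, hx, rfl⟩; exact (h x hx).2⟩
  exact ⟨le_trans (h x0 hx0).1 (le_csSup hb ⟨x0, hx0, rfl⟩),
    csSup_le ⟨f x0, ⟨x0, hx0, rfl⟩⟩ (by rintro y ⟨x, hx, rfl⟩; exact (h x hx).2)⟩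

lemma sInf_range_sSup_affine {Uu : Type*} [Nonempty Uu] {α : Type*} (a c : ℝ) (hc : 0 < c)
    (f : Uu → α → ℝ) (A : Set α) (hne : A.Nonempty)
    (lo hi : ℝ) (hbd : ∀ u, ∀ x ∈ A, lo ≤ f u x ∧ f u x ≤ hi) :
    sInf (Set.range fun u => sSup ((fun x => a + c * f u x) '' A))
      = a + c * sInf (Set.range fun u => sSup (f u '' A)) := by
  have h1 : ∀ u, sSup ((fun x => a + c * f u x) '' A) = a + c * sSup (f u '' A) := by
    intro u
    rw [show (fun x => a + c * f u x) '' A = (fun y => a + c * y) '' (f u '' A) by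
      rw [Set.image_image]]
    exact csSup_affine a c hc _ (hne.image _)
      ⟨hi, by rintro y ⟨x, hx, rfl⟩; exact (hbd u x hx).2⟩
  calc sInf (Set.range fun u => sSup ((fun x => a + c * f u x) '' A))
      = sInf (Set.range fun u => a + c * sSup (f u '' A)) := by
        exact congrArg sInf (congrArg Set.range (funext fun u => h1 u))
    _ = sInf ((fun y => a + c * y) '' (Set.range fun u => sSup (f u '' A))) := by
        rw [← Set.range_comp]
        rfl
    _ = a + c * sInf (Set.range fun u => sSup (f u '' A)) := by
        refine csInf_affine a c hc _ (Set.range_nonempty _) ⟨lo, ?_⟩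
        rintro y ⟨u, rfl⟩
        exact (sSup_bound hne (f u) lo hi (hbd u)).1

/-! ### Contraction of the observable-cost DP operator -/

lemma DPopB_lip {Sb Uu : Type*} [Nonempty Uu] {γ : ℝ} (hγ : 0 ≤ γ)
    (F : Sb → Uu → Set (ℝ × Sb)) (Λ Λ' : Sb → ℝ) (δ : ℝ) (hδ : 0 ≤ δ)
    (h : ∀ s, |Λ s - Λ' s| ≤ δ) (s : Sb) :
    |DPopB γ F Λ s - DPopB γ F Λ' s| ≤ γ * δ := by
  unfold DPopB
  rw [← Set.image_univ, ← Set.image_univ]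
  refine abs_sInf_image_sub_le _ _ _ _ (mul_nonneg hγ hδ) ?_
  intro u _
  refine abs_sSup_image_sub_le _ _ _ _ (mul_nonneg hγ hδ) ?_
  intro p _
  calc |(p.1 + γ * Λ p.2) - (p.1 + γ * Λ' p.2)| = γ * |Λ p.2 - Λ' p.2| := by
        rw [show (p.1 + γ * Λ p.2) - (p.1 + γ * Λ' p.2) = γ * (Λ p.2 - Λ' p.2) by ring,
          abs_mul, abs_of_nonneg hγ]
    _ ≤ γ * δ := mul_le_mul_of_nonneg_left (h p.2) hγ

lemma DPopBIter_close {Sb Uu : Type*} [Nonempty Sb] [Nonempty Uu] {γ : ℝ} (hγ0 : 0 < γ) (hγ1 : γ < 1)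
    (F : Sb → Uu → Set (ℝ × Sb)) (Λinf : Sb → ℝ) (B : ℝ) (hB : ∀ s, |Λinf s| ≤ B)
    (hfix : ∀ s, DPopB γ F Λinf s = Λinf s) :
    ∀ n s, |DPopBIter γ F n s - Λinf s| ≤ γ ^ n * B := by
  intro n
  induction n with
  | zero =>
    intro s
    rw [pow_zero, one_mul]
    show |0 - Λinf s| ≤ B
    rw [zero_sub, abs_neg]
    exact hB s
  | succ n IH =>
    intro s
    have hδ : 0 ≤ γ ^ n * B := le_trans (abs_nonneg _) (IH (Classical.arbitrary Sb))
    have := DPopB_lip hγ0.le F (DPopBIter γ F n) Λinf (γ ^ n * B) hδ IH s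
    rw [hfix s] at this
    calc |DPopBIter γ F (n+1) s - Λinf s| ≤ γ * (γ ^ n * B) := this
      _ = γ ^ (n+1) * B := by rw [pow_succ]; ring

lemma cmax_add_amax (S : Sys) : S.cmax + S.γ * S.amax = S.amax := by
  rw [Sys.amax]
  have h := one_sub_γ_pos S
  field_simp
  ring

/-! ### Bounds on the finite-horizon value functions -/

lemma JoptO_bounds (S : Sys) :
    ∀ n t (m : S.MemO t), (S.consistentO t m).Nonempty →
      0 ≤ S.JoptO n t m ∧ S.JoptO n t m ≤ AofM S m + S.γ ^ t * S.amax := by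
  intro n
  induction n with
  | zero =>
    intro t m hne
    have hbd : ∀ u : S.U, 0 ≤ sSup ((fun ω => S.oA ω t m.2.2
        + S.γ ^ t * S.oc ω t (Fin.snoc m.2.2 u)) '' S.consistentO t m)
        ∧ sSup ((fun ω => S.oA ω t m.2.2 + S.γ ^ t * S.oc ω t (Fin.snoc m.2.2 u))
            '' S.consistentO t m) ≤ AofM S m + S.γ ^ t * S.amax := by
      intro u
      refine sSup_bound hne _ 0 (AofM S m + S.γ ^ t * S.amax) fun ω hω => ?_
      rw [oA_eq_AofM S hω]
      have h1 := S.hcost t (fun i => ω i) (Fin.snoc m.2.2 u)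
      have h2 := pow_nonneg S.hγ0.le t
      have h3 := AofM_nonneg S hne
      have h4 : S.oc ω t (Fin.snoc m.2.2 u) ≤ S.amax := le_trans h1.2 (cmax_le_amax S)
      have h5 : 0 ≤ S.oc ω t (Fin.snoc m.2.2 u) := le_trans S.hcmin h1.1
      constructor
      · positivity
      · nlinarith
    constructor
    · exact Real.sInf_nonneg (by rintro y ⟨u, rfl⟩; exact (hbd u).1)
    · refine le_trans (csInf_le ⟨0, by rintro y ⟨u, rfl⟩; exact (hbd u).1⟩
        ⟨Classical.arbitrary S.U, rfl⟩) (hbd _).2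
  | succ n IH =>
    intro t m hne
    have hbd : ∀ u : S.U, 0 ≤ sSup ((fun ω => S.JoptO n (t+1)
          (S.omemO ω (t+1) (Fin.snoc m.2.2 u))) '' S.consistentO t m)
        ∧ sSup ((fun ω => S.JoptO n (t+1) (S.omemO ω (t+1) (Fin.snoc m.2.2 u)))
            '' S.consistentO t m) ≤ AofM S m + S.γ ^ t * S.amax := by
      intro u
      refine sSup_bound hne _ 0 (AofM S m + S.γ ^ t * S.amax) fun ω hω => ?_
      have hm' : (S.consistentO (t+1) (S.omemO ω (t+1) (Fin.snoc m.2.2 u))).Nonempty :=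
        ⟨ω, omemO_mem_consistentO S ω (t+1) _⟩
      obtain ⟨hlo, hhi⟩ := IH (t+1) (S.omemO ω (t+1) (Fin.snoc m.2.2 u)) hm'
      refine ⟨hlo, le_trans hhi ?_⟩
      rw [AofM_omemO S u hω]
      have h1 := S.hcost t (fun i => ω i) (Fin.snoc m.2.2 u)
      have h2 := pow_nonneg S.hγ0.le t
      have hkey := cmax_add_amax S
      have hγ := S.hγ0.le
      have hamax := amax_nonneg S
      have h1' : S.oc ω t (Fin.snoc m.2.2 u) ≤ S.cmax := h1.2
      calc AofM S m + S.γ ^ t * S.oc ω t (Fin.snoc m.2.2 u) + S.γ ^ (t+1) * S.amax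
          ≤ AofM S m + S.γ ^ t * S.cmax + S.γ ^ (t+1) * S.amax := by nlinarith [h1']
        _ = AofM S m + S.γ ^ t * (S.cmax + S.γ * S.amax) := by rw [pow_succ]; ring
        _ = AofM S m + S.γ ^ t * S.amax := by rw [hkey]
    constructor
    · exact Real.sInf_nonneg (by rintro y ⟨u, rfl⟩; exact (hbd u).1)
    · refine le_trans (csInf_le ⟨0, by rintro y ⟨u, rfl⟩; exact (hbd u).1⟩
        ⟨Classical.arbitrary S.U, rfl⟩) (hbd _).2

/-! ### The key identity: finite-horizon value = DP iterates through the info state -/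

lemma Jopt_eq (S : Sys) {Sb : Type} (σ : (t : ℕ) → S.MemO t → Sb)
    (F : Sb → S.U → Set (ℝ × Sb))
    (hinfo : ∀ (t : ℕ) (m : S.MemO t) (u : S.U), S.CSrange σ t m u = F (σ t m) u)
    (K : ℝ) (hK : 0 ≤ K) (hΛ : ∀ n s, |DPopBIter S.γ F n s| ≤ K) :
    ∀ n t (m : S.MemO t), (S.consistentO t m).Nonempty →
      S.JoptO n t m = AofM S m + S.γ ^ t * DPopBIter S.γ F (n+1) (σ t m) := by
  have hγt : ∀ t : ℕ, (0:ℝ) < S.γ ^ t := fun t => pow_pos S.hγ0 t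
  intro n
  induction n with
  | zero =>
    intro t m hne
    set Λ : Sb → ℝ := DPopBIter S.γ F 0 with hΛ0
    have hΛz : ∀ s, Λ s = 0 := fun _ => rfl
    have hint : ∀ u : S.U, ∀ ω ∈ S.consistentO t m,
        S.oA ω t m.2.2 + S.γ ^ t * S.oc ω t (Fin.snoc m.2.2 u)
          = AofM S m + S.γ ^ t * (S.oc ω t (Fin.snoc m.2.2 u)
              + S.γ * Λ (σ (t+1) (S.omemO ω (t+1) (Fin.snoc m.2.2 u)))) := by
      intro u ω hω
      rw [oA_eq_AofM S hω, hΛz]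
      ring
    have hJ : S.JoptO 0 t m = sInf (Set.range fun u : S.U =>
        sSup ((fun ω => AofM S m + S.γ ^ t * (S.oc ω t (Fin.snoc m.2.2 u)
          + S.γ * Λ (σ (t+1) (S.omemO ω (t+1) (Fin.snoc m.2.2 u))))) '' S.consistentO t m)) := by
      show sInf _ = _
      exact congrArg sInf (congrArg Set.range (funext fun u =>
        congrArg sSup (Set.image_congr (hint u))))
    rw [hJ]
    rw [sInf_range_sSup_affine (AofM S m) (S.γ ^ t) (hγt t) _ _ hne
      (S.cmin - S.γ * K) (S.cmax + S.γ * K) ?bd]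
    case bd =>
      intro u ω hω
      have h1 := S.hcost t (fun i => ω i) (Fin.snoc m.2.2 u)
      have h1a : S.cmin ≤ S.oc ω t (Fin.snoc m.2.2 u) := h1.1
      have h1b : S.oc ω t (Fin.snoc m.2.2 u) ≤ S.cmax := h1.2
      have h2 := abs_le.1 (hΛ 0 (σ (t+1) (S.omemO ω (t+1) (Fin.snoc m.2.2 u))))
      have hγ := S.hγ0.le
      constructor <;> nlinarith [h2.1, h2.2]
    congr 1
    congr 1
    show sInf _ = sInf _
    refine congrArg sInf (congrArg Set.range (funext fun u => congrArg sSup ?_))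
    rw [← hinfo t m u]
    show _ = (fun p : ℝ × Sb => p.1 + S.γ * Λ p.2) ''
      ((fun ω => (S.oc ω t (Fin.snoc m.2.2 u),
        σ (t+1) (S.omemO ω (t+1) (Fin.snoc m.2.2 u)))) '' S.consistentO t m)
    rw [← Set.image_comp]
    rfl
  | succ n IH =>
    intro t m hne
    set Λ : Sb → ℝ := DPopBIter S.γ F (n+1) with hΛn
    have hint : ∀ u : S.U, ∀ ω ∈ S.consistentO t m,
        S.JoptO n (t+1) (S.omemO ω (t+1) (Fin.snoc m.2.2 u))
          = AofM S m + S.γ ^ t * (S.oc ω t (Fin.snoc m.2.2 u)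
              + S.γ * Λ (σ (t+1) (S.omemO ω (t+1) (Fin.snoc m.2.2 u)))) := by
      intro u ω hω
      rw [IH (t+1) _ ⟨ω, omemO_mem_consistentO S ω (t+1) _⟩, AofM_omemO S u hω, pow_succ]
      ring
    have hJ : S.JoptO (n+1) t m = sInf (Set.range fun u : S.U =>
        sSup ((fun ω => AofM S m + S.γ ^ t * (S.oc ω t (Fin.snoc m.2.2 u)
          + S.γ * Λ (σ (t+1) (S.omemO ω (t+1) (Fin.snoc m.2.2 u))))) '' S.consistentO t m)) := by
      show sInf _ = _
      exact congrArg sInf (congrArg Set.range (funext fun u =>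
        congrArg sSup (Set.image_congr (hint u))))
    rw [hJ]
    rw [sInf_range_sSup_affine (AofM S m) (S.γ ^ t) (hγt t) _ _ hne
      (S.cmin - S.γ * K) (S.cmax + S.γ * K) ?bd2]
    case bd2 =>
      intro u ω hω
      have h1 := S.hcost t (fun i => ω i) (Fin.snoc m.2.2 u)
      have h1a : S.cmin ≤ S.oc ω t (Fin.snoc m.2.2 u) := h1.1
      have h1b : S.oc ω t (Fin.snoc m.2.2 u) ≤ S.cmax := h1.2
      have h2 := abs_le.1 (hΛ (n+1) (σ (t+1) (S.omemO ω (t+1) (Fin.snoc m.2.2 u))))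
      have hγ := S.hγ0.le
      constructor <;> nlinarith [h2.1, h2.2]
    congr 1
    congr 1
    show sInf _ = sInf _
    refine congrArg sInf (congrArg Set.range (funext fun u => congrArg sSup ?_))
    rw [← hinfo t m u]
    show _ = (fun p : ℝ × Sb => p.1 + S.γ * Λ p.2) ''
      ((fun ω => (S.oc ω t (Fin.snoc m.2.2 u),
        σ (t+1) (S.omemO ω (t+1) (Fin.snoc m.2.2 u)))) '' S.consistentO t m)
    rw [← Set.image_comp]
    rfl

/-! ### Lower bound: `J ≤ V^g` -/

lemma cAO_nonneg (S : Sys) (g : S.StratO) (ω : ℕ → S.W) (t : ℕ) : 0 ≤ S.cAO g ω t :=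
  Finset.sum_nonneg fun ℓ _ => mul_nonneg (pow_nonneg S.hγ0.le ℓ) (ccostO_nonneg S g ω ℓ)

lemma cAO_le_amax (S : Sys) (g : S.StratO) (ω : ℕ → S.W) (t : ℕ) : S.cAO g ω t ≤ S.amax := by
  calc S.cAO g ω t ≤ ∑ ℓ ∈ Finset.range t, S.γ ^ ℓ * S.cmax :=
        Finset.sum_le_sum fun ℓ _ =>
          mul_le_mul_of_nonneg_left (ccostO_mem S g ω ℓ).2 (pow_nonneg S.hγ0.le ℓ)
    _ ≤ S.amax := sum_geom_cmax_le S t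

lemma bddAbove_P (S : Sys) (g : S.StratO) (n t : ℕ) (A : Set (ℕ → S.W)) :
    BddAbove ((fun ω => S.cAO g ω t + S.γ ^ t * Ppart S g n t ω) '' A) := by
  refine ⟨S.amax + S.γ ^ t * S.amax, ?_⟩
  rintro y ⟨ω, hω, rfl⟩
  have h1 := cAO_le_amax S g ω t
  have h2 := Ppart_le_amax S g n t ω
  have h3 := pow_nonneg S.hγ0.le t
  dsimp only
  nlinarith

lemma bddAbove_V (S : Sys) (g : S.StratO) (t : ℕ) (A : Set (ℕ → S.W)) :
    BddAbove ((fun ω => S.cAO g ω t + S.γ ^ t * S.cCinfO g ω t) '' A) := by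
  refine ⟨S.amax + S.γ ^ t * S.amax, ?_⟩
  rintro y ⟨ω, hω, rfl⟩
  have h1 := cAO_le_amax S g ω t
  have h2 := cCinfO_le_amax S g ω t
  have h3 := pow_nonneg S.hγ0.le t
  dsimp only
  nlinarith

lemma Jopt_le_sSupP (S : Sys) (g : S.StratO) :
    ∀ n t (m : S.MemO t), (∃ ω₀, S.memOfO g ω₀ t = m) →
      S.JoptO n t m ≤ sSup ((fun ω => S.cAO g ω t + S.γ ^ t * Ppart S g n t ω)
        '' {ω | S.memOfO g ω t = m}) := by
  intro n
  induction n with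
  | zero =>
    intro t m h
    obtain ⟨ω₀, hω₀⟩ := h
    have hCeq := consistentO_eq S g t m ⟨ω₀, hω₀⟩
    have hne : (S.consistentO t m).Nonempty := ⟨ω₀, by rw [hCeq]; exact hω₀⟩
    have hZ : S.JoptO 0 t m ≤ sSup ((fun ω => S.oA ω t m.2.2
        + S.γ ^ t * S.oc ω t (Fin.snoc m.2.2 (g t m))) '' S.consistentO t m) := by
      refine csInf_le ⟨0, ?_⟩ ⟨g t m, rfl⟩
      rintro y ⟨u, rfl⟩
      refine (sSup_bound hne _ 0 (S.amax + S.γ ^ t * S.amax) fun ω hω => ?_).1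
      rw [oA_eq_AofM S hω]
      have h1 := S.hcost t (fun i => ω i) (Fin.snoc m.2.2 u)
      have h1a : S.cmin ≤ S.oc ω t (Fin.snoc m.2.2 u) := h1.1
      have h1b : S.oc ω t (Fin.snoc m.2.2 u) ≤ S.cmax := h1.2
      have h2 := pow_nonneg S.hγ0.le t
      have h3 := AofM_nonneg S hne
      have h4 := AofM_le_amax S hne
      have h5 := cmax_le_amax S
      have h6 := S.hcmin
      constructor <;> nlinarith
    refine le_trans hZ (le_of_eq ?_)
    rw [hCeq]
    refine congrArg sSup (Set.image_congr fun ω hω => ?_)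
    have hA : S.oA ω t m.2.2 = S.cAO g ω t := by
      rw [oA_eq_AofM S (by rw [hCeq]; exact hω), cAO_eq_AofM S g ω hω]
    have hc : S.oc ω t (Fin.snoc m.2.2 (g t m)) = S.ccostO g ω t := oc_snoc S g ω hω
    rw [hA, hc]
    unfold Ppart
    rw [Finset.sum_range_one]
    simp
  | succ n IH =>
    intro t m h
    obtain ⟨ω₀, hω₀⟩ := h
    have hCeq := consistentO_eq S g t m ⟨ω₀, hω₀⟩
    have hne : (S.consistentO t m).Nonempty := ⟨ω₀, by rw [hCeq]; exact hω₀⟩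
    have hZ : S.JoptO (n+1) t m ≤ sSup ((fun ω => S.JoptO n (t+1)
        (S.omemO ω (t+1) (Fin.snoc m.2.2 (g t m)))) '' S.consistentO t m) := by
      refine csInf_le ⟨0, ?_⟩ ⟨g t m, rfl⟩
      rintro y ⟨u, rfl⟩
      refine (sSup_bound hne _ 0 (AofM S m + S.γ ^ t * S.amax) fun ω hω => ?_).1
      have hm' : (S.consistentO (t+1) (S.omemO ω (t+1) (Fin.snoc m.2.2 u))).Nonempty :=
        ⟨ω, omemO_mem_consistentO S ω (t+1) _⟩
      obtain ⟨hlo, hhi⟩ := JoptO_bounds S n (t+1) _ hm'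
      exact ⟨hlo, le_trans hhi (by
        rw [AofM_omemO S u hω]
        have h1 : S.oc ω t (Fin.snoc m.2.2 u) ≤ S.cmax := (S.hcost t _ _).2
        have h2 := pow_nonneg S.hγ0.le t
        have hkey := cmax_add_amax S
        calc AofM S m + S.γ ^ t * S.oc ω t (Fin.snoc m.2.2 u) + S.γ ^ (t+1) * S.amax
            ≤ AofM S m + S.γ ^ t * S.cmax + S.γ ^ (t+1) * S.amax := by nlinarith
          _ = AofM S m + S.γ ^ t * (S.cmax + S.γ * S.amax) := by rw [pow_succ]; ring
          _ = AofM S m + S.γ ^ t * S.amax := by rw [hkey])⟩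
    refine le_trans hZ ?_
    rw [hCeq]
    refine csSup_le ⟨_, Set.mem_image_of_mem _ (show ω₀ ∈ {ω | S.memOfO g ω t = m} from hω₀)⟩ ?_
    rintro y ⟨ω, hω, rfl⟩
    have hω' : S.memOfO g ω t = m := hω
    have hmm : S.omemO ω (t+1) (Fin.snoc m.2.2 (g t m)) = S.memOfO g ω (t+1) :=
      omemO_snoc S g ω hω'
    dsimp only
    rw [hmm]
    refine le_trans (IH (t+1) (S.memOfO g ω (t+1)) ⟨ω, rfl⟩) ?_
    refine csSup_le ⟨_, Set.mem_image_of_mem _ (show ω ∈ {ω' | S.memOfO g ω' (t+1)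
      = S.memOfO g ω (t+1)} from rfl)⟩ ?_
    rintro y ⟨ω', hω'', rfl⟩
    have hpre : S.memOfO g ω' t = m := by
      rw [memOfO_prefix S g hω'']
      exact hω'
    dsimp only
    rw [Ppart_shift S g ω' t n]
    exact le_csSup (bddAbove_P S g (n+1) t _) ⟨ω', hpre, rfl⟩

lemma Jopt_le_VO (S : Sys) (g : S.StratO) (n t : ℕ) (m : S.MemO t)
    (h : ∃ ω₀, S.memOfO g ω₀ t = m) : S.JoptO n t m ≤ S.VO g t m := by
  obtain ⟨ω₀, hω₀⟩ := h
  refine le_trans (Jopt_le_sSupP S g n t m ⟨ω₀, hω₀⟩) ?_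
  refine csSup_le ⟨_, Set.mem_image_of_mem _ (show ω₀ ∈ {ω | S.memOfO g ω t = m} from hω₀)⟩ ?_
  rintro y ⟨ω, hω, rfl⟩
  have h1 : Ppart S g n t ω ≤ S.cCinfO g ω t := Ppart_le_cCinfO S g ω t n
  have h2 := pow_nonneg S.hγ0.le t
  refine le_trans ?_ (le_csSup (bddAbove_V S g t _) ⟨ω, hω, rfl⟩)
  dsimp only
  nlinarith

/-! ### Upper bound: an ε-optimal strategy -/

/-- The per-action value whose infimum defines `JoptO`. -/
def Zfun (S : Sys) : (f t : ℕ) → S.MemO t → S.U → ℝ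
  | 0, t, m, u => sSup ((fun ω => S.oA ω t m.2.2 + S.γ ^ t * S.oc ω t (Fin.snoc m.2.2 u))
      '' S.consistentO t m)
  | (n+1), t, m, u => sSup ((fun ω => S.JoptO n (t+1) (S.omemO ω (t+1) (Fin.snoc m.2.2 u)))
      '' S.consistentO t m)

lemma JoptO_eq_sInf_Z (S : Sys) (f t : ℕ) (m : S.MemO t) :
    S.JoptO f t m = sInf (Set.range (Zfun S f t m)) := by
  cases f <;> rfl

open Classical in
/-- An `ε`-optimal action choice. -/
noncomputable def pick (S : Sys) (f t : ℕ) (m : S.MemO t) (ε : ℝ) : S.U :=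
  if h : ∃ u, Zfun S f t m u ≤ S.JoptO f t m + ε then h.choose else Classical.arbitrary S.U

lemma pick_spec (S : Sys) (f t : ℕ) (m : S.MemO t) (ε : ℝ) (hε : 0 < ε) :
    Zfun S f t m (pick S f t m ε) ≤ S.JoptO f t m + ε := by
  have hex : ∃ u, Zfun S f t m u ≤ S.JoptO f t m + ε := by
    have hlt : sInf (Set.range (Zfun S f t m)) < S.JoptO f t m + ε := by
      rw [JoptO_eq_sInf_Z]
      exact lt_add_of_pos_right _ hε
    obtain ⟨y, ⟨u, rfl⟩, hy⟩ := exists_lt_of_csInf_lt (Set.range_nonempty _) hlt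
    exact ⟨u, hy.le⟩
  rw [pick, dif_pos hex]
  exact hex.choose_spec

/-- The ε-optimal strategy for horizon `n`. -/
noncomputable def gE (S : Sys) (n : ℕ) (ε : ℝ) : S.StratO := fun t m => pick S (n - t) t m ε

lemma sSup_P_le (S : Sys) (n : ℕ) (ε : ℝ) (hε : 0 < ε) :
    ∀ f t (m : S.MemO t), n - t = f → t ≤ n → (∃ ω₀, S.memOfO (gE S n ε) ω₀ t = m) →
      sSup ((fun ω => S.cAO (gE S n ε) ω t + S.γ ^ t * Ppart S (gE S n ε) f t ω)
        '' {ω | S.memOfO (gE S n ε) ω t = m}) ≤ S.JoptO f t m + (f+1) * ε := by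
  set g := gE S n ε with hg
  intro f
  induction f with
  | zero =>
    intro t m hf ht h
    obtain ⟨ω₀, hω₀⟩ := h
    have hCeq := consistentO_eq S g t m ⟨ω₀, hω₀⟩
    have hne : (S.consistentO t m).Nonempty := ⟨ω₀, by rw [hCeq]; exact hω₀⟩
    have heq : sSup ((fun ω => S.cAO g ω t + S.γ ^ t * Ppart S g 0 t ω)
        '' {ω | S.memOfO g ω t = m}) = Zfun S 0 t m (g t m) := by
      show _ = sSup _
      rw [← hCeq]
      refine congrArg sSup (Set.image_congr fun ω hω => ?_)
      have hω' : S.memOfO g ω t = m := by rw [hCeq] at hω; exact hω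
      have hA : S.cAO g ω t = S.oA ω t m.2.2 := by
        rw [oA_eq_AofM S hω, cAO_eq_AofM S g ω hω']
      have hc : S.oc ω t (Fin.snoc m.2.2 (g t m)) = S.ccostO g ω t := oc_snoc S g ω hω'
      rw [hA, hc]
      unfold Ppart
      rw [Finset.sum_range_one]
      simp
    rw [heq]
    have : g t m = pick S 0 t m ε := by rw [hg]; show pick S (n - t) t m ε = _; rw [hf]
    rw [this]
    have := pick_spec S 0 t m ε hε
    push_cast
    linarith
  | succ f IHf =>
    intro t m hf ht h
    obtain ⟨ω₀, hω₀⟩ := h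
    have hCeq := consistentO_eq S g t m ⟨ω₀, hω₀⟩
    have hne : (S.consistentO t m).Nonempty := ⟨ω₀, by rw [hCeq]; exact hω₀⟩
    have hgt : g t m = pick S (f+1) t m ε := by rw [hg]; show pick S (n - t) t m ε = _; rw [hf]
    have hZbd : BddAbove ((fun ω => S.JoptO f (t+1)
        (S.omemO ω (t+1) (Fin.snoc m.2.2 (g t m)))) '' S.consistentO t m) := by
      refine ⟨AofM S m + S.γ ^ t * S.amax, ?_⟩
      rintro y ⟨ω, hω, rfl⟩
      have hm' : (S.consistentO (t+1) (S.omemO ω (t+1) (Fin.snoc m.2.2 (g t m)))).Nonempty :=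
        ⟨ω, omemO_mem_consistentO S ω (t+1) _⟩
      obtain ⟨hlo, hhi⟩ := JoptO_bounds S f (t+1) _ hm'
      refine le_trans hhi ?_
      rw [AofM_omemO S (g t m) hω]
      have h1 : S.oc ω t (Fin.snoc m.2.2 (g t m)) ≤ S.cmax := (S.hcost t _ _).2
      have h2 := pow_nonneg S.hγ0.le t
      have hkey := cmax_add_amax S
      calc AofM S m + S.γ ^ t * S.oc ω t (Fin.snoc m.2.2 (g t m)) + S.γ ^ (t+1) * S.amax
          ≤ AofM S m + S.γ ^ t * S.cmax + S.γ ^ (t+1) * S.amax := by nlinarith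
        _ = AofM S m + S.γ ^ t * (S.cmax + S.γ * S.amax) := by rw [pow_succ]; ring
        _ = AofM S m + S.γ ^ t * S.amax := by rw [hkey]
    refine csSup_le ⟨_, Set.mem_image_of_mem _ (show ω₀ ∈ {ω | S.memOfO g ω t = m}
      from hω₀)⟩ ?_
    rintro y ⟨ω, hω, rfl⟩
    have hω' : S.memOfO g ω t = m := hω
    dsimp only
    rw [← Ppart_shift S g ω t f]
    have step1 : S.cAO g ω (t+1) + S.γ ^ (t+1) * Ppart S g f (t+1) ω
        ≤ sSup ((fun ω' => S.cAO g ω' (t+1) + S.γ ^ (t+1) * Ppart S g f (t+1) ω')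
          '' {ω' | S.memOfO g ω' (t+1) = S.memOfO g ω (t+1)}) :=
      le_csSup (bddAbove_P S g f (t+1) _) ⟨ω, rfl, rfl⟩
    have step2 := IHf (t+1) (S.memOfO g ω (t+1)) (by omega) (by omega) ⟨ω, rfl⟩
    have step3 : S.JoptO f (t+1) (S.memOfO g ω (t+1))
        ≤ Zfun S (f+1) t m (g t m) := by
      have hmm : S.omemO ω (t+1) (Fin.snoc m.2.2 (g t m)) = S.memOfO g ω (t+1) :=
        omemO_snoc S g ω hω'
      have hmem : ω ∈ S.consistentO t m := by rw [hCeq]; exact hω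
      refine le_trans (le_of_eq ?_) (le_csSup hZbd ⟨ω, hmem, rfl⟩)
      show _ = S.JoptO f (t+1) (S.omemO ω (t+1) (Fin.snoc m.2.2 (g t m)))
      rw [hmm]
    have step4 : Zfun S (f+1) t m (g t m) ≤ S.JoptO (f+1) t m + ε := by
      rw [hgt]
      exact pick_spec S (f+1) t m ε hε
    have : ((f:ℝ)+1+1) * ε = ε + ((f:ℝ)+1) * ε := by ring
    push_cast
    linarith

end NSCAux

open NSCAux in
theorem stmt14' (S : Sys) {Sb : Type} [Nonempty Sb] [MetricSpace Sb]
    (hSb : Bornology.IsBounded (Set.univ : Set Sb))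
    (σ : (t : ℕ) → S.MemO t → Sb) (F : Sb → S.U → Set (ℝ × Sb))
    (hinfo : ∀ (t : ℕ) (m : S.MemO t) (u : S.U), S.CSrange σ t m u = F (σ t m) u)
    (Λinf : Sb → ℝ) (hbd : ∃ B, ∀ s, |Λinf s| ≤ B)
    (hfix : ∀ s, DPopB S.γ F Λinf s = Λinf s)
    (y0 : S.Y) (hy : (S.consistentO 0 (S.memO0 y0)).Nonempty) :
    Λinf (σ 0 (S.memO0 y0)) = S.VoptO 0 (S.memO0 y0) := by
  classical
  obtain ⟨B₀, hB₀⟩ := hbd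
  have hBnn : 0 ≤ B₀ := le_trans (abs_nonneg _) (hB₀ (Classical.arbitrary Sb))
  set m0 := S.memO0 y0 with hm0
  have hclose := DPopBIter_close S.hγ0 S.hγ1 F Λinf B₀ hB₀ hfix
  have hK : ∀ n s, |DPopBIter S.γ F n s| ≤ 2 * B₀ := by
    intro n s
    have h1 := hclose n s
    have h2 := hB₀ s
    have hγn : S.γ ^ n ≤ 1 := pow_le_one₀ S.hγ0.le S.hγ1.le
    have h3 : |DPopBIter S.γ F n s| ≤ |DPopBIter S.γ F n s - Λinf s| + |Λinf s| := by
      calc |DPopBIter S.γ F n s| = |(DPopBIter S.γ F n s - Λinf s) + Λinf s| := by ring_nf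
        _ ≤ _ := abs_add_le _ _
    have h4 : S.γ ^ n * B₀ ≤ B₀ := by nlinarith [pow_nonneg S.hγ0.le n]
    linarith
  have hJeq := Jopt_eq S σ F hinfo (2*B₀) (by linarith) hK
  have hAm0 : AofM S m0 = 0 := by
    unfold AofM
    simp
  have hJ0 : ∀ n, S.JoptO n 0 m0 = DPopBIter S.γ F (n+1) (σ 0 m0) := by
    intro n
    rw [hJeq n 0 m0 hy, hAm0, pow_zero]
    ring
  obtain ⟨ωy, hωy⟩ := hy
  have hy0 : S.h0 (ωy 0) = y0 := congrFun (congrArg Prod.fst hωy) ⟨0, by omega⟩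
  have hmem0 : ∀ g : S.StratO, S.memOfO g ωy 0 = m0 := by
    intro g
    refine Prod.ext ?_ (Prod.ext ?_ ?_)
    · funext i
      exact hy0
    · funext i; exact absurd i.isLt (by omega)
    · funext i; exact absurd i.isLt (by omega)
  have hVset : ∀ y ∈ (fun g => S.VO g 0 m0) '' {g : S.StratO | ∃ ω, S.memOfO g ω 0 = m0},
      0 ≤ y := by
    rintro y ⟨g, ⟨ω₁, hω₁⟩, rfl⟩
    refine (sSup_bound ⟨ω₁, hω₁⟩ _ 0 (S.amax + S.γ ^ 0 * S.amax) fun ω hω => ?_).1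
    have h1 := cAO_nonneg S g ω 0
    have h2 := cAO_le_amax S g ω 0
    have h3 := cCinfO_nonneg S g ω 0
    have h4 := cCinfO_le_amax S g ω 0
    constructor <;> · simp only [pow_zero, one_mul]; linarith
  have hlow : ∀ n, S.JoptO n 0 m0 ≤ S.VoptO 0 m0 := by
    intro n
    have g0 : S.StratO := fun t _ => Classical.arbitrary S.U
    refine le_csInf ⟨S.VO g0 0 m0, ⟨g0, ⟨ωy, hmem0 g0⟩, rfl⟩⟩ ?_
    rintro y ⟨g, hg, rfl⟩
    exact Jopt_le_VO S g n 0 m0 hg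
  have hup : ∀ n, S.VoptO 0 m0 ≤ S.JoptO n 0 m0 + S.γ ^ (n+1) * S.amax := by
    intro n
    refine le_of_forall_pos_le_add ?_
    intro ε hε
    set ε' := ε / (n+1) with hε'
    have hε'pos : 0 < ε' := by positivity
    set g := gE S n ε' with hgdef
    have h1 : S.VoptO 0 m0 ≤ S.VO g 0 m0 :=
      csInf_le ⟨0, hVset⟩ ⟨g, ⟨ωy, hmem0 g⟩, rfl⟩
    have h2 : S.VO g 0 m0 ≤ sSup ((fun ω => S.cAO g ω 0 + S.γ ^ 0 * Ppart S g n 0 ω)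
        '' {ω | S.memOfO g ω 0 = m0}) + S.γ ^ (n+1) * S.amax := by
      refine csSup_le ⟨_, Set.mem_image_of_mem _ (show ωy ∈ {ω | S.memOfO g ω 0 = m0}
        from hmem0 g)⟩ ?_
      rintro y ⟨ω, hω, rfl⟩
      have hsplit := cCinfO_le_Ppart S g ω 0 n
      have hle : S.cAO g ω 0 + S.γ ^ 0 * S.cCinfO g ω 0
          ≤ (S.cAO g ω 0 + S.γ ^ 0 * Ppart S g n 0 ω) + S.γ ^ (n+1) * S.amax := by
        simp only [pow_zero, one_mul] at *
        linarith
      refine le_trans hle ?_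
      have := le_csSup (bddAbove_P S g n 0 _) (Set.mem_image_of_mem
        (fun ω => S.cAO g ω 0 + S.γ ^ 0 * Ppart S g n 0 ω) (show ω ∈ {ω | S.memOfO g ω 0 = m0} from hω))
      linarith
    have h3 := sSup_P_le S n ε' hε'pos n 0 m0 (by omega) (by omega) ⟨ωy, hmem0 g⟩
    have h4 : ((n:ℝ)+1) * ε' = ε := by
      rw [hε']
      field_simp
    linarith
  have hdiff : ∀ n : ℕ, |Λinf (σ 0 m0) - S.VoptO 0 m0| ≤ S.γ ^ (n+1) * (B₀ + S.amax) := by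
    intro n
    have e1 := hclose (n+1) (σ 0 m0)
    rw [← hJ0 n] at e1
    obtain ⟨e1a, e1b⟩ := abs_le.1 e1
    have e2 := hlow n
    have e3 := hup n
    have hexp : S.γ ^ (n+1) * (B₀ + S.amax) = S.γ ^ (n+1) * B₀ + S.γ ^ (n+1) * S.amax :=
      mul_add _ _ _
    rw [abs_le]
    constructor <;> linarith
  have hlim : Filter.Tendsto (fun n : ℕ => S.γ ^ (n+1) * (B₀ + S.amax))
      Filter.atTop (nhds 0) := by
    have h1 : Filter.Tendsto (fun n : ℕ => S.γ ^ n) Filter.atTop (nhds 0) :=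
      tendsto_pow_atTop_nhds_zero_of_lt_one S.hγ0.le S.hγ1
    have h2 := (h1.mul_const (B₀ + S.amax)).comp (Filter.tendsto_add_atTop_nat 1)
    simpa [Function.comp_def] using h2
  have hzero : |Λinf (σ 0 m0) - S.VoptO 0 m0| ≤ 0 :=
    ge_of_tendsto hlim (Filter.Eventually.of_forall hdiff)
  have := abs_eq_zero.1 (le_antisymm hzero (abs_nonneg _))
  linarith [this]

theorem stmt14 (S : Sys) {Sb : Type} [Nonempty Sb] [MetricSpace Sb]
    (hSb : Bornology.IsBounded (Set.univ : Set Sb))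
    (σ : (t : ℕ) → S.MemO t → Sb) (F : Sb → S.U → Set (ℝ × Sb))
    (hinfo : ∀ (t : ℕ) (m : S.MemO t) (u : S.U), S.CSrange σ t m u = F (σ t m) u)
    (Λinf : Sb → ℝ) (hbd : ∃ B, ∀ s, |Λinf s| ≤ B)
    (hfix : ∀ s, DPopB S.γ F Λinf s = Λinf s)
    (y0 : S.Y) (hy : (S.consistentO 0 (S.memO0 y0)).Nonempty) :
    Λinf (σ 0 (S.memO0 y0)) = S.VoptO 0 (S.memO0 y0) := by
  exact stmt14' S hSb σ F hinfo Λinf hbd hfix y0 hy
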